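/- arXiv:2404.00581 — 2 statements merged into one kernel-verified Lean document; each statement's English description precedes it below -/
import Mathlib

section
/- Let 𝕊 and 𝕋 be algebraic theories whose free algebra monads are S and T, and let λ : ST ⇒ TS be a distributive law. Define E_λ := { (s[t_x/x], t[s_y/y]) | λ_𝒱([s[[t_x]_𝕋/x]]_𝕊) = [t[[s_y]_𝕊/y]]_𝕋 }, and let 𝕌^λ be the algebraic theory with signature Σ_𝕊 ⊎ Σ_𝕋 and equations E_𝕊 ∪ E_𝕋 ∪ E_λ. Then 𝕌^λ is a composite theory of 𝕋 after 𝕊: every 𝕌^λ-term is 𝕌^λ-equal to a separated term, and any two 𝕌^λ-equal separated terms are equal modulo (𝕊,𝕋). -/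
/-! ## Algebraic signatures, terms and equational logic -/

/-- An algebraic signature: a set of operation symbols with arities. -/
structure Sgn where
  ops : Type
  ar : ops → ℕ

/-- Terms over a signature `σ` with variables in `X`. -/
inductive Trm (σ : Sgn) (X : Type) : Type
  | var : X → Trm σ X
  | op : (f : σ.ops) → (Fin (σ.ar f) → Trm σ X) → Trm σ X

/-- Simultaneous substitution. -/
def Trm.bind {σ : Sgn} {X Y : Type} : Trm σ X → (X → Trm σ Y) → Trm σ Y
  | .var x, g => g x
  | .op f k, g => .op f fun i => (k i).bind g

/-- Renaming of variables. -/
def Trm.rename {σ : Sgn} {X Y : Type} (f : X → Y) (t : Trm σ X) : Trm σ Y :=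
  t.bind fun x => .var (f x)

/-- Equations over `σ`: pairs of terms over the fixed countable set `ℕ` of variables. -/
abbrev Eqn (σ : Sgn) := Trm σ ℕ × Trm σ ℕ

/-- Derivability in equational logic from the set of axioms `E`
(axioms, reflexivity, symmetry, transitivity, congruence, substitution). -/
inductive Deriv {σ : Sgn} (E : Set (Eqn σ)) : {X : Type} → Trm σ X → Trm σ X → Prop
  | ax {X : Type} {e : Eqn σ} (he : e ∈ E) (g : ℕ → Trm σ X) :
      Deriv E (e.1.bind g) (e.2.bind g)
  | refl {X : Type} (t : Trm σ X) : Deriv E t t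
  | symm {X : Type} {s t : Trm σ X} : Deriv E s t → Deriv E t s
  | trans {X : Type} {s t u : Trm σ X} : Deriv E s t → Deriv E t u → Deriv E s u
  | congr {X : Type} (f : σ.ops) {k k' : Fin (σ.ar f) → Trm σ X} :
      (∀ i, Deriv E (k i) (k' i)) → Deriv E (.op f k) (.op f k')
  | subst {X Y : Type} {s t : Trm σ X} (g : X → Trm σ Y) :
      Deriv E s t → Deriv E (s.bind g) (t.bind g)

/-- An algebraic theory: a signature together with a set of equations. -/
structure Thy where
  sig : Sgn
  eqns : Set (Eqn sig)

/-! ## The free algebra monad -/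

/-- Carrier of the free algebra monad: terms modulo derivable equality. -/
def FreeM (σ : Sgn) (E : Set (Eqn σ)) (X : Type) : Type :=
  Quot (fun s t : Trm σ X => Deriv E s t)

/-- Equivalence class of a term. -/
def FreeM.mk {σ : Sgn} {E : Set (Eqn σ)} {X : Type} (t : Trm σ X) : FreeM σ E X :=
  Quot.mk _ t

/-- Functorial action of the free algebra monad. -/
noncomputable def FreeM.map {σ : Sgn} {E : Set (Eqn σ)} {X Y : Type}
    (f : X → Y) (q : FreeM σ E X) : FreeM σ E Y :=
  FreeM.mk ((Quot.out q).rename f)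

/-- Unit of the free algebra monad. -/
def FreeM.unit {σ : Sgn} {E : Set (Eqn σ)} {X : Type} (x : X) : FreeM σ E X :=
  FreeM.mk (.var x)

/-- Multiplication of the free algebra monad (flattening). -/
noncomputable def FreeM.mul {σ : Sgn} {E : Set (Eqn σ)} {X : Type}
    (q : FreeM σ E (FreeM σ E X)) : FreeM σ E X :=
  FreeM.mk ((Quot.out q).bind fun c => Quot.out c)

/-! ## Disjoint union of signatures and separated terms -/

/-- Disjoint union of two signatures. -/
def Sgn.sum (σ τ : Sgn) : Sgn := ⟨σ.ops ⊕ τ.ops, Sum.elim σ.ar τ.ar⟩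

/-- Embedding of `σ`-terms into terms over the sum signature. -/
def Trm.inl {σ τ : Sgn} {X : Type} : Trm σ X → Trm (σ.sum τ) X
  | .var x => .var x
  | .op f k => .op (Sum.inl f) fun i => (k i).inl

/-- Embedding of `τ`-terms into terms over the sum signature. -/
def Trm.inr {σ τ : Sgn} {X : Type} : Trm τ X → Trm (σ.sum τ) X
  | .var x => .var x
  | .op f k => .op (Sum.inr f) fun i => (k i).inr

/-- Flattening of a separated term `t[s_x/x]` (`τ`-term over `σ`-terms)
into a term over the sum signature. -/
def sepTS {σ τ : Sgn} {X : Type} (t : Trm τ (Trm σ X)) : Trm (σ.sum τ) X :=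
  (Trm.inr t).bind fun s => Trm.inl s

/-- Flattening of a mixed term `s[t_x/x]` (`σ`-term over `τ`-terms)
into a term over the sum signature. -/
def sepST {σ τ : Sgn} {X : Type} (s : Trm σ (Trm τ X)) : Trm (σ.sum τ) X :=
  (Trm.inl s).bind fun t => Trm.inr t

/-- The element `[t[[s_x]_𝕊/x]]_𝕋` of `TSX` determined by a separated term. -/
def clTS (SS TT : Thy) {X : Type} (t : Trm TT.sig (Trm SS.sig X)) :
    FreeM TT.sig TT.eqns (FreeM SS.sig SS.eqns X) :=
  FreeM.mk (t.rename FreeM.mk)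

/-- The element `[s[[t_x]_𝕋/x]]_𝕊` of `STX` determined by a mixed term. -/
def clST (SS TT : Thy) {X : Type} (s : Trm SS.sig (Trm TT.sig X)) :
    FreeM SS.sig SS.eqns (FreeM TT.sig TT.eqns X) :=
  FreeM.mk (s.rename FreeM.mk)

/-! ## Composite theories -/

/-- A composite theory of `TT` after `SS`: a theory on the disjoint union
of the signatures, containing both sets of equations, in which every term
has a separation, and separations are essentially unique. -/
structure Composite (SS TT : Thy) where
  eqns : Set (Eqn (SS.sig.sum TT.sig))
  containsS : ∀ e ∈ SS.eqns, ((Trm.inl e.1 : Trm (SS.sig.sum TT.sig) ℕ), Trm.inl e.2) ∈ eqns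
  containsT : ∀ e ∈ TT.eqns, ((Trm.inr e.1 : Trm (SS.sig.sum TT.sig) ℕ), Trm.inr e.2) ∈ eqns
  sepExists : ∀ u : Trm (SS.sig.sum TT.sig) ℕ,
      ∃ t : Trm TT.sig (Trm SS.sig ℕ), Deriv eqns u (sepTS t)
  sepUnique : ∀ t t' : Trm TT.sig (Trm SS.sig ℕ),
      Deriv eqns (sepTS t) (sepTS t') → clTS SS TT t = clTS SS TT t'

/-! ## Distributive laws between free algebra monads -/

/-- A distributive law `λ : ST ⇒ TS` between the free algebra monads of `SS` and `TT`. -/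
structure DistLaw (SS TT : Thy) where
  app : ∀ X : Type, FreeM SS.sig SS.eqns (FreeM TT.sig TT.eqns X) →
      FreeM TT.sig TT.eqns (FreeM SS.sig SS.eqns X)
  natural : ∀ (X Y : Type) (f : X → Y)
      (q : FreeM SS.sig SS.eqns (FreeM TT.sig TT.eqns X)),
      app Y (FreeM.map (FreeM.map f) q) = FreeM.map (FreeM.map f) (app X q)
  unitS : ∀ (X : Type) (q : FreeM TT.sig TT.eqns X),
      app X (FreeM.unit q) = FreeM.map FreeM.unit q
  unitT : ∀ (X : Type) (q : FreeM SS.sig SS.eqns X),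
      app X (FreeM.map FreeM.unit q) = FreeM.unit q
  mulS : ∀ (X : Type)
      (q : FreeM SS.sig SS.eqns (FreeM SS.sig SS.eqns (FreeM TT.sig TT.eqns X))),
      app X (FreeM.mul q) =
        FreeM.map FreeM.mul (app (FreeM SS.sig SS.eqns X) (FreeM.map (app X) q))
  mulT : ∀ (X : Type)
      (q : FreeM SS.sig SS.eqns (FreeM TT.sig TT.eqns (FreeM TT.sig TT.eqns X))),
      app X (FreeM.map FreeM.mul q) =
        FreeM.mul (FreeM.map (app X) (app (FreeM TT.sig TT.eqns X) q))

/-! ## The theory `𝕌^λ` obtained from a distributive law -/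

/-- The set `E_λ` of all equations between mixed terms and separated terms
that are related by the distributive law `λ`. -/
def Elam (SS TT : Thy) (d : DistLaw SS TT) : Set (Eqn (SS.sig.sum TT.sig)) :=
  { e | ∃ (s : Trm SS.sig (Trm TT.sig ℕ)) (t : Trm TT.sig (Trm SS.sig ℕ)),
      e = (sepST s, sepTS t) ∧ d.app ℕ (clST SS TT s) = clTS SS TT t }

/-- The equations of `𝕊`, embedded into the sum signature. -/
def embedS (SS TT : Thy) : Set (Eqn (SS.sig.sum TT.sig)) :=
  { e | ∃ e₀ ∈ SS.eqns, e = (Trm.inl e₀.1, Trm.inl e₀.2) }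

/-- The equations of `𝕋`, embedded into the sum signature. -/
def embedT (SS TT : Thy) : Set (Eqn (SS.sig.sum TT.sig)) :=
  { e | ∃ e₀ ∈ TT.eqns, e = (Trm.inr e₀.1, Trm.inr e₀.2) }

/-- The equations `E_𝕊 ∪ E_𝕋 ∪ E_λ` of the theory `𝕌^λ`. -/
def EUlam (SS TT : Thy) (d : DistLaw SS TT) : Set (Eqn (SS.sig.sum TT.sig)) :=
  embedS SS TT ∪ embedT SS TT ∪ Elam SS TT d

/-! ## Auxiliary lemmas -/

namespace Trm
variable {σ : Sgn} {X Y Z : Type}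

theorem bind_var (t : Trm σ X) : t.bind Trm.var = t := by
  induction t with
  | var x => rfl
  | op f k ih => simp only [Trm.bind]; exact congrArg _ (funext ih)

theorem bind_bind (t : Trm σ X) (g : X → Trm σ Y) (k : Y → Trm σ Z) :
    (t.bind g).bind k = t.bind fun x => (g x).bind k := by
  induction t with
  | var x => rfl
  | op f h ih => simp only [Trm.bind]; exact congrArg _ (funext ih)

theorem rename_bind (t : Trm σ X) (f : X → Y) (g : Y → Trm σ Z) :
    (t.rename f).bind g = t.bind fun x => g (f x) := by
  simp only [Trm.rename, bind_bind]; rfl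

theorem bind_rename (t : Trm σ X) (g : X → Trm σ Y) (f : Y → Z) :
    (t.bind g).rename f = t.bind fun x => (g x).rename f := bind_bind t g _

theorem rename_rename (t : Trm σ X) (f : X → Y) (g : Y → Z) :
    (t.rename f).rename g = t.rename fun x => g (f x) := rename_bind t f _

theorem rename_id (t : Trm σ X) : t.rename (fun x => x) = t := bind_var t

theorem rename_var (φ : X → Y) (x : X) : Trm.rename φ (.var x : Trm σ X) = .var (φ x) := rfl

theorem rename_op (φ : X → Y) (f : σ.ops) (k : Fin (σ.ar f) → Trm σ X) :
    Trm.rename φ (.op f k) = .op f fun i => Trm.rename φ (k i) := rfl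

def leaves : Trm σ X → List X
  | .var x => [x]
  | .op _ k => (List.ofFn fun i => (k i).leaves).flatten

theorem bind_eq_of_leaves (t : Trm σ X) (g g' : X → Trm σ Y)
    (h : ∀ x ∈ t.leaves, g x = g' x) : t.bind g = t.bind g' := by
  induction t with
  | var x => exact h x (by simp [leaves])
  | op f k ih =>
      simp only [Trm.bind]
      refine congrArg _ (funext fun i => ih i fun x hx => h x ?_)
      simp only [leaves, List.mem_flatten]
      exact ⟨(k i).leaves, List.mem_ofFn.mpr ⟨i, rfl⟩, hx⟩

end Trm

namespace FreeM
variable {σ : Sgn} {E : Set (Eqn σ)} {X Y Z : Type}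

theorem Deriv.bind_congr {g g' : X → Trm σ Y} (t : Trm σ X)
    (h : ∀ x, Deriv E (g x) (g' x)) : Deriv E (t.bind g) (t.bind g') := by
  induction t with
  | var x => exact h x
  | op f k ih => exact Deriv.congr f ih

theorem ind {motive : FreeM σ E X → Prop} (h : ∀ t, motive (FreeM.mk t)) : ∀ q, motive q :=
  Quot.ind h

theorem sound {s t : Trm σ X} (h : Deriv E s t) : FreeM.mk (E := E) s = FreeM.mk t :=
  Quot.sound h

theorem exact {s t : Trm σ X} (h : FreeM.mk (E := E) s = FreeM.mk t) : Deriv E s t := by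
  have h' := Quot.eqvGen_exact h
  clear h
  induction h' with
  | rel _ _ h => exact h
  | refl => exact .refl _
  | symm _ _ _ ih => exact ih.symm
  | trans _ _ _ _ _ ih1 ih2 => exact ih1.trans ih2

theorem mk_out (q : FreeM σ E X) : FreeM.mk (Quot.out q) = q := Quot.out_eq q

theorem out_deriv (t : Trm σ X) : Deriv E (Quot.out (FreeM.mk (E := E) t)) t :=
  exact (mk_out _)

theorem out_deriv_of_eq {q : FreeM σ E X} {u : Trm σ X} (h : q = FreeM.mk u) :
    Deriv E (Quot.out q) u := exact (by rw [mk_out, h])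

theorem map_mk (f : X → Y) (t : Trm σ X) :
    FreeM.map (E := E) f (FreeM.mk t) = FreeM.mk (t.rename f) := by
  unfold FreeM.map
  exact sound (Deriv.subst _ (out_deriv t))

theorem mul_mk (u : Trm σ (FreeM σ E X)) :
    FreeM.mul (FreeM.mk u) = FreeM.mk (u.bind Quot.out) := by
  unfold FreeM.mul
  exact sound (Deriv.subst _ (out_deriv u))

theorem map_id (q : FreeM σ E X) : FreeM.map (fun x => x) q = q := by
  induction q using ind with
  | h t => rw [map_mk, Trm.rename_id]

theorem map_map (f : Y → Z) (g : X → Y) (q : FreeM σ E X) :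
    FreeM.map f (FreeM.map g q) = FreeM.map (fun x => f (g x)) q := by
  induction q using ind with
  | h t => rw [map_mk, map_mk, map_mk, Trm.rename_rename]

theorem map_unit (f : X → Y) (x : X) :
    FreeM.map (E := E) f (FreeM.unit x) = FreeM.unit (f x) := map_mk f (.var x)

theorem mul_unit (q : FreeM σ E X) : FreeM.mul (FreeM.unit q) = q := by
  rw [show FreeM.unit q = FreeM.mk (E := E) (.var q) from rfl, mul_mk]
  exact mk_out q

theorem mul_map_unit (q : FreeM σ E X) : FreeM.mul (FreeM.map FreeM.unit q) = q := by
  induction q using ind with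
  | h u =>
    erw [map_mk, mul_mk, Trm.rename_bind]
    refine (sound (Deriv.bind_congr u fun x => out_deriv _)).trans ?_
    rw [Trm.bind_var]

theorem map_mul (f : X → Y) (q : FreeM σ E (FreeM σ E X)) :
    FreeM.map f (FreeM.mul q) = FreeM.mul (FreeM.map (FreeM.map f) q) := by
  induction q using ind with
  | h u =>
    erw [mul_mk, map_mk, map_mk, mul_mk, Trm.bind_rename, Trm.rename_bind]
    refine sound (Deriv.bind_congr u fun c => ?_)
    refine exact ?_
    rw [← map_mk, mk_out, mk_out]

theorem mul_map_mul (q : FreeM σ E (FreeM σ E (FreeM σ E X))) :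
    FreeM.mul (FreeM.map FreeM.mul q) = FreeM.mul (FreeM.mul q) := by
  induction q using ind with
  | h u =>
    rw [map_mk, mul_mk, mul_mk, mul_mk]; erw [Trm.rename_bind, Trm.bind_bind]
    refine sound (Deriv.bind_congr u fun c => ?_)
    refine exact ?_
    rw [mk_out, ← mul_mk, mk_out]

theorem mul_op_var (f : σ.ops) (r : Fin (σ.ar f) → Trm σ (FreeM σ E X)) :
    FreeM.mul (FreeM.mk (.op f fun i => .var (FreeM.mul (FreeM.mk (r i))))) =
      FreeM.mul (FreeM.mk (.op f r)) := by
  rw [mul_mk, mul_mk]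
  refine sound (Deriv.congr f fun i => ?_)
  exact out_deriv_of_eq (mul_mk (r i))

end FreeM

section CompositeConstruction

variable (SS TT : Thy) (d : DistLaw SS TT)

/-- The `S`-algebra structure on `TSX` induced by the distributive law. -/
noncomputable def sAlg {X : Type}
    (r : FreeM SS.sig SS.eqns (FreeM TT.sig TT.eqns (FreeM SS.sig SS.eqns X))) :
    FreeM TT.sig TT.eqns (FreeM SS.sig SS.eqns X) :=
  FreeM.map FreeM.mul (d.app (FreeM SS.sig SS.eqns X) r)

/-- Evaluation of sum-signature terms in the composite monad `TS`. -/
noncomputable def eval {X : Type} : Trm (SS.sig.sum TT.sig) X →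
    FreeM TT.sig TT.eqns (FreeM SS.sig SS.eqns X)
  | .var x => FreeM.unit (FreeM.unit x)
  | .op (Sum.inl f) k => sAlg SS TT d (FreeM.mk (.op f fun i => .var (eval (k i))))
  | .op (Sum.inr f) k => FreeM.mul (FreeM.mk (.op f fun i => .var (eval (k i))))

theorem eval_var {X : Type} (x : X) :
    eval SS TT d (.var x) = FreeM.unit (FreeM.unit x) := rfl

theorem eval_opl {X : Type} (f : SS.sig.ops) (k : Fin (SS.sig.ar f) → Trm (SS.sig.sum TT.sig) X) :
    eval SS TT d (.op (Sum.inl f) k) =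
      sAlg SS TT d (FreeM.mk (.op f fun i => .var (eval SS TT d (k i)))) := rfl

theorem eval_opr {X : Type} (f : TT.sig.ops) (k : Fin (TT.sig.ar f) → Trm (SS.sig.sum TT.sig) X) :
    eval SS TT d (.op (Sum.inr f) k) =
      FreeM.mul (FreeM.mk (.op f fun i => .var (eval SS TT d (k i)))) := rfl

theorem sAlg_unit {X : Type} (q : FreeM TT.sig TT.eqns (FreeM SS.sig SS.eqns X)) :
    sAlg SS TT d (FreeM.unit q) = q := by
  unfold sAlg
  rw [d.unitS, FreeM.map_map]
  rw [show (fun c : FreeM SS.sig SS.eqns X => FreeM.mul (FreeM.unit c)) = fun c => c from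
    funext fun c => FreeM.mul_unit c]
  exact FreeM.map_id q

theorem sAlg_assoc {X : Type}
    (w : FreeM SS.sig SS.eqns (FreeM SS.sig SS.eqns (FreeM TT.sig TT.eqns (FreeM SS.sig SS.eqns X)))) :
    sAlg SS TT d (FreeM.mul w) = sAlg SS TT d (FreeM.map (sAlg SS TT d) w) := by
  unfold sAlg
  rw [d.mulS, FreeM.map_map]
  have hr : FreeM.map (fun r => FreeM.map FreeM.mul (d.app (FreeM SS.sig SS.eqns X) r)) w
      = FreeM.map (FreeM.map FreeM.mul) (FreeM.map (d.app (FreeM SS.sig SS.eqns X)) w) := by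
    rw [FreeM.map_map]
  rw [hr, d.natural, FreeM.map_map]
  exact congrArg (fun φ => FreeM.map φ (d.app _ (FreeM.map (d.app _) w)))
    (funext fun c => (FreeM.mul_map_mul c).symm)

theorem sAlg_op_var {X : Type} (f : SS.sig.ops)
    (r : Fin (SS.sig.ar f) → Trm SS.sig (FreeM TT.sig TT.eqns (FreeM SS.sig SS.eqns X))) :
    sAlg SS TT d (FreeM.mk (.op f fun i => .var (sAlg SS TT d (FreeM.mk (r i))))) =
      sAlg SS TT d (FreeM.mk (.op f r)) := by
  have h1 : FreeM.mk (E := SS.eqns) (.op f fun i => .var (sAlg SS TT d (FreeM.mk (r i))))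
      = FreeM.map (sAlg SS TT d) (FreeM.mk (.op f fun i => .var (FreeM.mk (r i)))) := by
    rw [FreeM.map_mk]; rfl
  rw [h1, ← sAlg_assoc, FreeM.mul_mk]
  exact congrArg _ (FreeM.sound (Deriv.congr f fun i => FreeM.out_deriv (r i)))

/-- Lifting of `h : Y → TSX` to `SY → TSX`. -/
noncomputable def lamG {X Y : Type} (h : Y → FreeM TT.sig TT.eqns (FreeM SS.sig SS.eqns X))
    (c : FreeM SS.sig SS.eqns Y) : FreeM TT.sig TT.eqns (FreeM SS.sig SS.eqns X) :=
  sAlg SS TT d (FreeM.map h c)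

/-- Kleisli extension of `h : Y → TSX` along the composite monad `TS`. -/
noncomputable def Ebind {X Y : Type} (q : FreeM TT.sig TT.eqns (FreeM SS.sig SS.eqns Y))
    (h : Y → FreeM TT.sig TT.eqns (FreeM SS.sig SS.eqns X)) :
    FreeM TT.sig TT.eqns (FreeM SS.sig SS.eqns X) :=
  FreeM.mul (FreeM.map (lamG SS TT d h) q)

/-- Lifting of `h : Y → TSX` to `TY → TSX`. -/
noncomputable def lamH {X Y : Type} (h : Y → FreeM TT.sig TT.eqns (FreeM SS.sig SS.eqns X))
    (c : FreeM TT.sig TT.eqns Y) : FreeM TT.sig TT.eqns (FreeM SS.sig SS.eqns X) :=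
  FreeM.mul (FreeM.map h c)

theorem Ebind_unit {X Y : Type} (h : Y → FreeM TT.sig TT.eqns (FreeM SS.sig SS.eqns X)) (y : Y) :
    Ebind SS TT d (FreeM.unit (FreeM.unit y)) h = h y := by
  unfold Ebind
  rw [FreeM.map_unit, FreeM.mul_unit]
  unfold lamG
  rw [FreeM.map_unit, sAlg_unit]

theorem Ebind_mul {X Y : Type}
    (p : FreeM TT.sig TT.eqns (FreeM TT.sig TT.eqns (FreeM SS.sig SS.eqns Y)))
    (h : Y → FreeM TT.sig TT.eqns (FreeM SS.sig SS.eqns X)) :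
    Ebind SS TT d (FreeM.mul p) h = FreeM.mul (FreeM.map (fun q => Ebind SS TT d q h) p) := by
  unfold Ebind
  rw [FreeM.map_mul, ← FreeM.mul_map_mul, FreeM.map_map]

theorem sAlg_map_lamH {X Y : Type} (h : Y → FreeM TT.sig TT.eqns (FreeM SS.sig SS.eqns X))
    (q : FreeM SS.sig SS.eqns (FreeM TT.sig TT.eqns Y)) :
    sAlg SS TT d (FreeM.map (lamH SS TT h) q) = Ebind SS TT d (d.app Y q) h := by
  unfold lamH Ebind sAlg
  have h1 : FreeM.map (fun c => FreeM.mul (FreeM.map h c)) q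
      = FreeM.map FreeM.mul (FreeM.map (FreeM.map h) q) := by rw [FreeM.map_map]
  rw [h1, d.mulT, d.natural, FreeM.map_map, FreeM.map_mul, FreeM.map_map]
  rfl

theorem lamG_mul {X Y : Type} (h : Y → FreeM TT.sig TT.eqns (FreeM SS.sig SS.eqns X))
    (c : FreeM SS.sig SS.eqns (FreeM SS.sig SS.eqns Y)) :
    lamG SS TT d h (FreeM.mul c) = sAlg SS TT d (FreeM.map (lamG SS TT d h) c) := by
  unfold lamG
  rw [FreeM.map_mul, sAlg_assoc, FreeM.map_map]

theorem Ebind_sAlg {X Y : Type} (h : Y → FreeM TT.sig TT.eqns (FreeM SS.sig SS.eqns X))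
    (r : FreeM SS.sig SS.eqns (FreeM TT.sig TT.eqns (FreeM SS.sig SS.eqns Y))) :
    Ebind SS TT d (sAlg SS TT d r) h
      = sAlg SS TT d (FreeM.map (fun q => Ebind SS TT d q h) r) := by
  have hL : Ebind SS TT d (sAlg SS TT d r) h
      = FreeM.mul (FreeM.map (sAlg SS TT d)
          (d.app _ (FreeM.map (FreeM.map (lamG SS TT d h)) r))) := by
    unfold Ebind
    rw [show sAlg SS TT d r = FreeM.map FreeM.mul (d.app _ r) from rfl]
    rw [FreeM.map_map, d.natural, FreeM.map_map]
    refine congrArg FreeM.mul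
      (congrArg (fun φ => FreeM.map φ (d.app _ r)) (funext fun c => ?_))
    exact lamG_mul SS TT d h c
  rw [hL]
  have hR : FreeM.map (fun q => Ebind SS TT d q h) r
      = FreeM.map FreeM.mul (FreeM.map (FreeM.map (lamG SS TT d h)) r) := by
    rw [FreeM.map_map]; rfl
  rw [hR, show ∀ z, sAlg SS TT d z = FreeM.map FreeM.mul (d.app _ z) from fun _ => rfl,
    d.mulT, FreeM.map_mul, FreeM.map_map]
  rfl

theorem eval_inr_bind {X Y : Type} (p : Trm TT.sig Y) (g : Y → Trm (SS.sig.sum TT.sig) X) :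
    eval SS TT d ((Trm.inr p).bind g)
      = FreeM.mul (FreeM.mk (p.rename fun y => eval SS TT d (g y))) := by
  induction p with
  | var y => exact (FreeM.mul_unit _).symm
  | op f k ih =>
    show eval SS TT d (.op (Sum.inr f) fun i => (Trm.inr (k i)).bind g) = _
    erw [eval_opr]
    rw [show (fun i => Trm.var (eval SS TT d ((Trm.inr (k i)).bind g)))
        = fun i => Trm.var (FreeM.mul (FreeM.mk ((k i).rename fun y => eval SS TT d (g y))))
      from funext fun i => congrArg _ (ih i)]
    exact FreeM.mul_op_var f _

theorem eval_inl_bind {X Y : Type} (p : Trm SS.sig Y) (g : Y → Trm (SS.sig.sum TT.sig) X) :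
    eval SS TT d ((Trm.inl p).bind g)
      = sAlg SS TT d (FreeM.mk (p.rename fun y => eval SS TT d (g y))) := by
  induction p with
  | var y => exact (sAlg_unit SS TT d _).symm
  | op f k ih =>
    show eval SS TT d (.op (Sum.inl f) fun i => (Trm.inl (k i)).bind g) = _
    erw [eval_opl]
    rw [show (fun i => Trm.var (eval SS TT d ((Trm.inl (k i)).bind g)))
        = fun i => Trm.var (sAlg SS TT d (FreeM.mk ((k i).rename fun y => eval SS TT d (g y))))
      from funext fun i => congrArg _ (ih i)]
    exact sAlg_op_var SS TT d f _

theorem eval_bind {X Y : Type} (u : Trm (SS.sig.sum TT.sig) Y)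
    (g : Y → Trm (SS.sig.sum TT.sig) X) :
    eval SS TT d (u.bind g) = Ebind SS TT d (eval SS TT d u) (fun y => eval SS TT d (g y)) := by
  induction u with
  | var y => exact (Ebind_unit SS TT d (fun y => eval SS TT d (g y)) y).symm
  | op f k ih =>
    cases f with
    | inl f =>
      show eval SS TT d (.op (Sum.inl f) fun i => (k i).bind g) = _
      erw [eval_opl, eval_opl, Ebind_sAlg, FreeM.map_mk]
      simp only [Trm.rename_op, Trm.rename_var]
      exact congrArg (fun z => sAlg SS TT d (FreeM.mk (Trm.op f z)))
        (funext fun i => congrArg Trm.var (ih i))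
    | inr f =>
      show eval SS TT d (.op (Sum.inr f) fun i => (k i).bind g) = _
      erw [eval_opr, eval_opr, Ebind_mul, FreeM.map_mk]
      simp only [Trm.rename_op, Trm.rename_var]
      exact congrArg (fun z => FreeM.mul (FreeM.mk (Trm.op f z)))
        (funext fun i => congrArg Trm.var (ih i))

theorem eval_sepTS_bind {X Y : Type} (t : Trm TT.sig (Trm SS.sig Y))
    (g : Y → Trm (SS.sig.sum TT.sig) X) :
    eval SS TT d ((sepTS t).bind g)
      = Ebind SS TT d (clTS SS TT t) (fun y => eval SS TT d (g y)) := by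
  rw [show (sepTS t).bind g = (Trm.inr t).bind fun s0 => (Trm.inl s0).bind g from
    Trm.bind_bind _ _ _]
  rw [eval_inr_bind]
  rw [show (fun s0 : Trm SS.sig Y => eval SS TT d ((Trm.inl s0).bind g))
      = fun s0 => sAlg SS TT d (FreeM.mk (s0.rename fun y => eval SS TT d (g y)))
    from funext fun s0 => eval_inl_bind SS TT d s0 g]
  unfold Ebind clTS
  rw [FreeM.map_mk, Trm.rename_rename]
  refine congrArg (fun z => FreeM.mul (FreeM.mk z))
    (congrArg (fun φ => Trm.rename φ t) (funext fun s0 => ?_))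
  unfold lamG
  rw [FreeM.map_mk]

theorem eval_sepST_bind {X Y : Type} (s : Trm SS.sig (Trm TT.sig Y))
    (g : Y → Trm (SS.sig.sum TT.sig) X) :
    eval SS TT d ((sepST s).bind g)
      = Ebind SS TT d (d.app Y (clST SS TT s)) (fun y => eval SS TT d (g y)) := by
  rw [show (sepST s).bind g = (Trm.inl s).bind fun t0 => (Trm.inr t0).bind g from
    Trm.bind_bind _ _ _]
  rw [eval_inl_bind]
  rw [show (fun t0 : Trm TT.sig Y => eval SS TT d ((Trm.inr t0).bind g))
      = fun t0 => FreeM.mul (FreeM.mk (t0.rename fun y => eval SS TT d (g y)))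
    from funext fun t0 => eval_inr_bind SS TT d t0 g]
  rw [← sAlg_map_lamH]
  unfold clST
  refine congrArg (sAlg SS TT d) ?_
  rw [FreeM.map_mk, Trm.rename_rename]
  refine congrArg FreeM.mk (congrArg (fun φ => Trm.rename φ s) (funext fun t0 => ?_))
  unfold lamH
  rw [FreeM.map_mk]

theorem lamG_unitunit {X : Type} (c : FreeM SS.sig SS.eqns X) :
    lamG SS TT d (fun x : X => FreeM.unit (FreeM.unit x)) c = FreeM.unit c := by
  induction c using FreeM.ind with
  | h s0 =>
    unfold lamG sAlg
    rw [FreeM.map_mk]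
    have h1 : FreeM.mk (E := SS.eqns)
          (s0.rename fun x => (FreeM.unit (E := TT.eqns) (FreeM.unit (E := SS.eqns) x)))
        = FreeM.map FreeM.unit
            ((FreeM.mk (s0.rename FreeM.unit) : FreeM SS.sig SS.eqns (FreeM SS.sig SS.eqns X))) := by
      rw [FreeM.map_mk, Trm.rename_rename]
    rw [h1, d.unitT, FreeM.map_unit]
    refine congrArg FreeM.unit ?_
    erw [FreeM.mul_mk, Trm.rename_bind]
    refine (FreeM.sound (FreeM.Deriv.bind_congr s0 fun x => FreeM.out_deriv _)).trans ?_
    rw [Trm.bind_var]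

theorem Ebind_eta {X : Type} (q : FreeM TT.sig TT.eqns (FreeM SS.sig SS.eqns X)) :
    Ebind SS TT d q (fun x => FreeM.unit (FreeM.unit x)) = q := by
  unfold Ebind
  rw [show lamG SS TT d (fun x : X => FreeM.unit (FreeM.unit x))
      = fun c => FreeM.unit c from funext fun c => lamG_unitunit SS TT d c]
  exact FreeM.mul_map_unit q

theorem eval_sepTS {X : Type} (t : Trm TT.sig (Trm SS.sig X)) :
    eval SS TT d (sepTS t) = clTS SS TT t := by
  have h := eval_sepTS_bind SS TT d t Trm.var
  rw [Trm.bind_var] at h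
  rw [h]
  exact Ebind_eta SS TT d _

theorem eval_sound {X : Type} {u v : Trm (SS.sig.sum TT.sig) X}
    (h : Deriv (EUlam SS TT d) u v) : eval SS TT d u = eval SS TT d v := by
  induction h with
  | @ax X e he g =>
    rcases he with (hS | hT) | hL
    · obtain ⟨e0, he0, heq⟩ := hS
      rw [heq]
      show eval SS TT d ((Trm.inl e0.1).bind g) = eval SS TT d ((Trm.inl e0.2).bind g)
      rw [eval_inl_bind, eval_inl_bind]
      refine congrArg (sAlg SS TT d) (FreeM.sound ?_)
      exact Deriv.ax he0 fun n => .var (eval SS TT d (g n))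
    · obtain ⟨e0, he0, heq⟩ := hT
      rw [heq]
      show eval SS TT d ((Trm.inr e0.1).bind g) = eval SS TT d ((Trm.inr e0.2).bind g)
      rw [eval_inr_bind, eval_inr_bind]
      refine congrArg FreeM.mul (FreeM.sound ?_)
      exact Deriv.ax he0 fun n => .var (eval SS TT d (g n))
    · obtain ⟨s0, t0, heq, hd0⟩ := hL
      rw [heq]
      show eval SS TT d ((sepST s0).bind g) = eval SS TT d ((sepTS t0).bind g)
      rw [eval_sepST_bind, eval_sepTS_bind, hd0]
  | refl t => rfl
  | symm _ ih => exact ih.symm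
  | trans _ _ ih1 ih2 => exact ih1.trans ih2
  | @congr X f k k' _ ih =>
    cases f with
    | inl f =>
      erw [eval_opl, eval_opl]
      exact congrArg (fun z => sAlg SS TT d (FreeM.mk (Trm.op f z)))
        (funext fun i => congrArg Trm.var (ih i))
    | inr f =>
      erw [eval_opr, eval_opr]
      exact congrArg (fun z => FreeM.mul (FreeM.mk (Trm.op f z)))
        (funext fun i => congrArg Trm.var (ih i))
  | @subst X Y s t g _ ih =>
    rw [eval_bind, eval_bind, ih]

theorem inl_bind_inl {A B : Type} (s0 : Trm SS.sig A) (v : A → Trm SS.sig B) :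
    (Trm.inl s0 : Trm (SS.sig.sum TT.sig) A).bind (fun a => Trm.inl (v a))
      = Trm.inl (s0.bind v) := by
  induction s0 with
  | var a => rfl
  | op f k ih =>
    show Trm.op (Sum.inl f) (fun i => (Trm.inl (k i)).bind fun a => Trm.inl (v a)) = _
    exact congrArg _ (funext ih)

theorem inr_bind_inl {A B : Type} (w : Trm TT.sig A) (v : A → Trm SS.sig B) :
    (Trm.inr w : Trm (SS.sig.sum TT.sig) A).bind (fun a => Trm.inl (v a))
      = sepTS (w.rename v) := by
  induction w with
  | var a => rfl
  | op f k ih =>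
    show Trm.op (Sum.inr f) (fun i => (Trm.inr (k i)).bind fun a => Trm.inl (v a)) = _
    exact congrArg _ (funext ih)

theorem sepTS_bind_inl {A B : Type} (t : Trm TT.sig (Trm SS.sig A)) (v : A → Trm SS.sig B) :
    (sepTS t).bind (fun a => Trm.inl (v a)) = sepTS (t.rename fun s0 => s0.bind v) := by
  induction t with
  | var s0 => exact inl_bind_inl SS TT s0 v
  | op f k ih =>
    show Trm.op (Sum.inr f) (fun i => (sepTS (k i)).bind fun a => Trm.inl (v a)) = _
    exact congrArg _ (funext ih)

theorem sepExists (u : Trm (SS.sig.sum TT.sig) ℕ) :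
    ∃ t : Trm TT.sig (Trm SS.sig ℕ), Deriv (EUlam SS TT d) u (sepTS t) := by
  induction u with
  | var x => exact ⟨.var (.var x), Deriv.refl _⟩
  | op f k ih =>
    choose ts hts using ih
    cases f with
    | inr f =>
      refine ⟨.op f ts, ?_⟩
      exact @Deriv.congr _ (EUlam SS TT d) _ (Sum.inr f) k (fun i => sepTS (ts i)) hts
    | inl f =>
      classical
      set L : List (Trm SS.sig ℕ) := (List.ofFn fun i => (ts i).leaves).flatten with hLdef
      set v : ℕ → Trm SS.sig ℕ := fun n => L.getD n (.var 0) with hvdef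
      set enc : Trm SS.sig ℕ → ℕ := fun z => L.idxOf z with hencdef
      have hve : ∀ z ∈ L, v (enc z) = z := by
        intro z hz
        have hlt : L.idxOf z < L.length := List.idxOf_lt_length_iff.mpr hz
        rw [hvdef, hencdef]
        simp only
        rw [List.getD_eq_getElem _ _ hlt, List.getElem_idxOf hlt]
      set s : Trm SS.sig (Trm TT.sig ℕ) := .op f fun i => .var ((ts i).rename enc) with hsdef
      set q := d.app ℕ (clST SS TT s) with hqdef
      set t0 : Trm TT.sig (Trm SS.sig ℕ) := (Quot.out q).rename Quot.out with ht0def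
      have hfun : (fun c : FreeM SS.sig SS.eqns ℕ => FreeM.mk (Quot.out c)) = fun c => c :=
        funext fun c => FreeM.mk_out c
      have ht0 : clTS SS TT t0 = q := by
        show FreeM.mk (((Quot.out q).rename Quot.out).rename FreeM.mk) = q
        calc FreeM.mk (((Quot.out q).rename Quot.out).rename FreeM.mk)
            = FreeM.mk ((Quot.out q).rename fun c => FreeM.mk (Quot.out c)) :=
              congrArg FreeM.mk (Trm.rename_rename _ _ _)
          _ = FreeM.mk ((Quot.out q).rename fun c => c) :=
              congrArg (fun φ => FreeM.mk ((Quot.out q).rename φ)) hfun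
          _ = FreeM.mk (Quot.out q) := congrArg FreeM.mk (Trm.rename_id _)
          _ = q := FreeM.mk_out q
      have hmem : (sepST s, sepTS t0) ∈ EUlam SS TT d :=
        Set.mem_union_right _ ⟨s, t0, rfl, ht0.symm⟩
      have hax := Deriv.ax hmem (fun n => Trm.inl (v n))
      have hlhs : (sepST s).bind (fun n => Trm.inl (v n))
          = Trm.op (Sum.inl f) fun i => sepTS (ts i) := by
        show Trm.op (Sum.inl f)
            (fun i => (Trm.inr ((ts i).rename enc)).bind fun n => Trm.inl (v n)) = _
        refine congrArg _ (funext fun i => ?_)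
        rw [inr_bind_inl, Trm.rename_rename]
        refine congrArg sepTS ?_
        refine (Trm.bind_eq_of_leaves (ts i) _ _ fun z hz => ?_).trans (Trm.bind_var (ts i))
        refine congrArg Trm.var (hve z ?_)
        rw [hLdef]
        exact List.mem_flatten.mpr ⟨(ts i).leaves, List.mem_ofFn.mpr ⟨i, rfl⟩, hz⟩
      have hrhs : (sepTS t0).bind (fun n => Trm.inl (v n))
          = sepTS (t0.rename fun s0 => s0.bind v) := sepTS_bind_inl SS TT t0 v
      rw [hlhs, hrhs] at hax
      refine ⟨t0.rename fun s0 => s0.bind v, Deriv.trans ?_ hax⟩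
      exact @Deriv.congr _ (EUlam SS TT d) _ (Sum.inl f) k (fun i => sepTS (ts i)) hts

end CompositeConstruction

/-! ## Statement 6: `𝕌^λ` is a composite theory of `𝕋` after `𝕊` -/

/-- The theory `𝕌^λ`, with signature `Σ_𝕊 ⊎ Σ_𝕋` and equations
`E_𝕊 ∪ E_𝕋 ∪ E_λ`, is a composite theory of `𝕋` after `𝕊`: every term has a
separation, and 𝕌^λ-equal separated terms are equal modulo `(𝕊,𝕋)`. -/
theorem Ulam_is_composite (SS TT : Thy) (d : DistLaw SS TT) :
    (∀ u : Trm (SS.sig.sum TT.sig) ℕ,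
        ∃ t : Trm TT.sig (Trm SS.sig ℕ), Deriv (EUlam SS TT d) u (sepTS t)) ∧
    (∀ t t' : Trm TT.sig (Trm SS.sig ℕ),
        Deriv (EUlam SS TT d) (sepTS t) (sepTS t') → clTS SS TT t = clTS SS TT t') := by
  refine ⟨sepExists SS TT d, fun t t' h => ?_⟩
  have h2 := eval_sound SS TT d h
  rwa [eval_sepTS, eval_sepTS] at h2
end

section
/- Let 𝕊, 𝕋, λ and 𝕌^λ be as in the construction of the composite theory from a distributive law. Then there is a function sep on terms over Σ_𝕊 ⊎ Σ_𝕋 such that for every term u, sep(u) is a separated term and u =_{𝕌^λ} sep(u). -/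
/-! ## Auxiliary lemmas for the separation function -/

theorem Trm.bind_var_s7 {σ : Sgn} {X : Type} (t : Trm σ X) :
    t.bind (fun x => .var x) = t := by
  induction t with
  | var x => rfl
  | op f k ih => exact congrArg _ (funext ih)

theorem Trm.bind_bind_s7 {σ : Sgn} {X Y Z : Type} (t : Trm σ X)
    (f : X → Trm σ Y) (g : Y → Trm σ Z) :
    (t.bind f).bind g = t.bind (fun x => (f x).bind g) := by
  induction t with
  | var x => rfl
  | op h k ih => exact congrArg _ (funext ih)

/-- The list of variables occurring in a term. -/
def Trm.varList {σ : Sgn} {X : Type} : Trm σ X → List X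
  | .var x => [x]
  | .op f k => (List.ofFn fun i => (k i).varList).flatten

theorem Trm.mem_varList_op {σ : Sgn} {X : Type} (f : σ.ops)
    (k : Fin (σ.ar f) → Trm σ X) (i : Fin (σ.ar f)) {a : X}
    (h : a ∈ (k i).varList) : a ∈ (Trm.op f k).varList :=
  List.mem_flatten.mpr ⟨(k i).varList,
    List.mem_ofFn.mpr ⟨i, rfl⟩, h⟩

/-- `clTS` of the canonical representative of `q` is `q` itself. -/
theorem clTS_out (SS TT : Thy)
    (q : FreeM TT.sig TT.eqns (FreeM SS.sig SS.eqns ℕ)) :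
    clTS SS TT ((Quot.out q).rename Quot.out) = q := by
  have h1 : ∀ c : FreeM SS.sig SS.eqns ℕ,
      ((Trm.var (Quot.out c) : Trm TT.sig (Trm SS.sig ℕ)).bind
        fun x => Trm.var (FreeM.mk x)) = Trm.var c :=
    fun c => congrArg Trm.var (Quot.out_eq c)
  have key : ((Quot.out q).rename Quot.out).rename FreeM.mk =
      ((Quot.out q).bind fun c => Trm.var c) := by
    unfold Trm.rename
    refine (Trm.bind_bind_s7 _ _ _).trans ?_
    exact congrArg _ (funext h1)
  show FreeM.mk (((Quot.out q).rename Quot.out).rename FreeM.mk) = q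
  rw [key, Trm.bind_var_s7]
  exact Quot.out_eq q

/-- Substitution into the `T`-layer of an abstracted separated term. -/
theorem sep_bind_left {σ τ : Sgn} {A : Type} (enc : A → ℕ)
    (g : ℕ → Trm (σ.sum τ) ℕ) (dec0 : A → Trm (σ.sum τ) ℕ)
    (w : Trm τ A) (hw : ∀ a ∈ w.varList, g (enc a) = dec0 a) :
    (Trm.inr (w.rename enc) : Trm (σ.sum τ) ℕ).bind g =
      (Trm.inr w).bind dec0 := by
  induction w with
  | var a => exact hw a (List.mem_singleton.mpr rfl)
  | op f k ih =>
      exact congrArg _ (funext fun i => ih i fun a ha =>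
        hw a (Trm.mem_varList_op f k i ha))

theorem inl_bind_inl_s7 {σ τ : Sgn} (s : Trm σ ℕ) (h : ℕ → Trm σ ℕ) :
    (Trm.inl s : Trm (σ.sum τ) ℕ).bind (fun n => Trm.inl (h n)) =
      Trm.inl (s.bind h) := by
  induction s with
  | var x => rfl
  | op f k ih => exact congrArg _ (funext ih)

/-- Substituting `σ`-terms into a separated term yields a separated term. -/
theorem sepTS_bind {σ τ : Sgn} (w : Trm τ (Trm σ ℕ)) (h : ℕ → Trm σ ℕ) :
    (sepTS w : Trm (σ.sum τ) ℕ).bind (fun n => Trm.inl (h n)) =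
      sepTS (w.rename fun s => s.bind h) := by
  induction w with
  | var s => exact inl_bind_inl_s7 s h
  | op f k ih => exact congrArg _ (funext ih)

/-- Main lemma: every term is derivably equal to a separated term. -/
theorem exists_separation (SS TT : Thy) (d : DistLaw SS TT)
    (u : Trm (SS.sig.sum TT.sig) ℕ) :
    ∃ t : Trm TT.sig (Trm SS.sig ℕ), Deriv (EUlam SS TT d) u (sepTS t) := by
  classical
  induction u with
  | var x => exact ⟨.var (.var x), Deriv.refl _⟩
  | op f k ih =>
      choose t ht using ih
      cases f with
      | inr f =>
          refine ⟨.op f t, ?_⟩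
          show Deriv (EUlam SS TT d) (Trm.op (Sum.inr f) k)
            (Trm.op (Sum.inr f) fun i => sepTS (t i))
          exact @Deriv.congr (SS.sig.sum TT.sig) (EUlam SS TT d) ℕ
            (Sum.inr f) k (fun i => sepTS (t i)) ht
      | inl f =>
          -- encode the finitely many σ-leaves of the `t i` as natural numbers
          set L : List (Trm SS.sig ℕ) :=
            (List.ofFn fun i => (t i).varList).flatten with hL
          let enc : Trm SS.sig ℕ → ℕ := fun a => L.idxOf a
          let dec : ℕ → Trm SS.sig ℕ := fun n => L.getD n (.var 0)
          have hdec : ∀ (i) (a : Trm SS.sig ℕ), a ∈ (t i).varList →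
              dec (enc a) = a := by
            intro i a ha
            have hmem : a ∈ L :=
              List.mem_flatten.mpr ⟨(t i).varList,
                List.mem_ofFn.mpr ⟨i, rfl⟩, ha⟩
            show L.getD (L.idxOf a) _ = a
            rw [List.getD_eq_getElem L _ (List.idxOf_lt_length_iff.mpr hmem)]
            exact List.getElem_idxOf _
          -- the mixed term abstracting the σ-leaves
          let s : Trm SS.sig (Trm TT.sig ℕ) :=
            .op f fun i => .var ((t i).rename enc)
          let q := d.app ℕ (clST SS TT s)
          let t' : Trm TT.sig (Trm SS.sig ℕ) := (Quot.out q).rename Quot.out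
          have hmemE : ((sepST s : Trm (SS.sig.sum TT.sig) ℕ), sepTS t')
              ∈ EUlam SS TT d :=
            Or.inr ⟨s, t', rfl, (clTS_out SS TT q).symm⟩
          let g : ℕ → Trm (SS.sig.sum TT.sig) ℕ := fun n => Trm.inl (dec n)
          have hstep : Deriv (EUlam SS TT d)
              ((sepST s).bind g) ((sepTS t').bind g) :=
            Deriv.ax hmemE g
          have hLft : (sepST s).bind g =
              Trm.op (Sum.inl f) (fun i => sepTS (t i)) := by
            show Trm.op (Sum.inl f)
                (fun i => (Trm.inr ((t i).rename enc)
                  : Trm (SS.sig.sum TT.sig) ℕ).bind g) = _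
            exact congrArg _ (funext fun i =>
              sep_bind_left enc g Trm.inl (t i) fun a ha =>
                congrArg Trm.inl (hdec i a ha))
          have hRgt : (sepTS t').bind g =
              sepTS (t'.rename fun sx => sx.bind dec) := sepTS_bind t' dec
          refine ⟨t'.rename fun sx => sx.bind dec, ?_⟩
          have hcg : Deriv (EUlam SS TT d) (Trm.op (Sum.inl f) k)
              (Trm.op (Sum.inl f) fun i => sepTS (t i)) :=
            @Deriv.congr (SS.sig.sum TT.sig) (EUlam SS TT d) ℕ
              (Sum.inl f) k (fun i => sepTS (t i)) ht
          exact Deriv.trans hcg (hLft ▸ hRgt ▸ hstep)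

/-! ## Statement 7: existence of a separation function for `𝕌^λ` -/

/-- There is a function `sep` on terms over `Σ_𝕊 ⊎ Σ_𝕋` such that for every
term `u`, `sep u` is a separated term and `u =_{𝕌^λ} sep u`. -/

theorem sep_function_exists (SS TT : Thy) (d : DistLaw SS TT) :
    ∃ sep : Trm (SS.sig.sum TT.sig) ℕ → Trm (SS.sig.sum TT.sig) ℕ,
      ∀ u : Trm (SS.sig.sum TT.sig) ℕ,
        (∃ t : Trm TT.sig (Trm SS.sig ℕ), sep u = sepTS t) ∧
        Deriv (EUlam SS TT d) u (sep u) := by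
  have h := exists_separation SS TT d
  choose t ht using h
  exact ⟨fun u => sepTS (t u), fun u => ⟨⟨t u, rfl⟩, ht u⟩⟩
end
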